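/- Let f∂ be a nonzero element of Witt(R) with W(f) = 1. Then every eigenvalue of ad(f∂) is an integer multiple of f'(0), and conversely for every integer N, N·f'(0) is an eigenvalue of ad(f∂) with one-dimensional eigenspace. -/

import Mathlib

/-!
Write `f = x q` with `q(0) = c = f'(0) ≠ 0`. For `g = x^n G` with `G(0) ≠ 0`, the bracket
`f g' - g f'` equals `x^n ((n - 1) q G + x (q G' - G q'))`, so comparing lowest terms in
`[f, g] = a g` forces `a = (n - 1) c`.

Conversely, `u = x exp(∫ r / q)`, where `c - q = x r`, solves `f u' = c u`, and then
`[f, f u^N] = f² (u^N)' = N c f u^N`.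

Two eigenvectors `g, h` for the same eigenvalue satisfy `f (h g' - g h') = 0`, so `(h / g)' = 0`
and `h / g` is a constant.
-/

namespace PowerSeries

variable {k : Type*} [Field k]

noncomputable def antiderivative (s : k⟦X⟧) : k⟦X⟧ :=
  mk fun n => if n = 0 then 0 else coeff (n - 1) s / n

theorem constantCoeff_antiderivative (s : k⟦X⟧) : constantCoeff (antiderivative s) = 0 := by
  simp [antiderivative, ← coeff_zero_eq_constantCoeff_apply]

theorem derivative_antiderivative [CharZero k] (s : k⟦X⟧) :
    d⁄dX k (antiderivative s) = s := by
  ext n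
  rw [coeff_derivative, antiderivative, coeff_mk, if_neg n.succ_ne_zero, Nat.add_sub_cancel]
  push_cast
  exact div_mul_cancel₀ _ (Nat.cast_add_one_ne_zero n)

theorem exists_derivative_eq_mul [CharZero k] (s : k⟦X⟧) :
    ∃ h : k⟦X⟧, constantCoeff h = 1 ∧ d⁄dX k h = s * h := by
  have hS := HasSubst.of_constantCoeff_zero' (constantCoeff_antiderivative s)
  refine ⟨(exp k).subst (antiderivative s), ?_, ?_⟩
  · have h0 : constantCoeff (exp k - 1) = 0 := by simp
    have := constantCoeff_subst_eq_zero (constantCoeff_antiderivative s) _ h0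
    rw [subst_sub hS, ← map_one (C (R := k)), subst_C, map_sub, sub_eq_zero, map_one] at this
    exact this
  · rw [derivative_subst hS, derivative_exp, derivative_antiderivative, mul_comm]

end PowerSeries

open HahnSeries
open scoped PowerSeries

namespace LaurentSeries

section Module

variable {R V : Type*} [Semiring R] [AddCommGroup V] [Module R V]

theorem ne_zero_of_order_eq_one {x : LaurentSeries V} (h : x.order = 1) : x ≠ 0 := by
  rintro rfl
  simp at h

theorem derivative_coeff (f : LaurentSeries V) (n : ℤ) :
    (derivative R f).coeff n = (n + 1) • f.coeff (n + 1) := by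
  simp

theorem eq_single_zero_of_derivative_eq_zero [IsAddTorsionFree V] {φ : LaurentSeries V}
    (h : derivative R φ = 0) : φ = single 0 (φ.coeff 0) := by
  ext n
  obtain rfl | hn := eq_or_ne n 0
  · simp
  · have := congrArg (HahnSeries.coeff · (n - 1)) h
    simp only [derivative_coeff, sub_add_cancel, coeff_zero] at this
    rw [coeff_single_of_ne hn, (smul_eq_zero_iff_right hn).mp this]

end Module

section CommRing

variable {R : Type*} [CommRing R]

theorem constantCoeff_powerSeriesPart (x : R⸨X⸩) :
    PowerSeries.constantCoeff x.powerSeriesPart = x.coeff x.order := by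
  rw [← PowerSeries.coeff_zero_eq_constantCoeff_apply, powerSeriesPart_coeff, Nat.cast_zero,
    add_zero]

theorem derivative_coe (F : R⟦X⟧) : derivative R (F : R⸨X⸩) = (d⁄dX R F : R⸨X⸩) := by
  ext n
  rw [derivative_coeff, PowerSeries.coeff_coe, PowerSeries.coeff_coe]
  rcases lt_trichotomy n (-1) with h | rfl | h
  · simp [show n < 0 by omega, show n + 1 < 0 by omega]
  · simp
  · lift n to ℕ using (by omega)
    simp [PowerSeries.coeff_derivative, show ¬ ((n : ℤ) + 1 < 0) by omega,
      Int.natAbs_add_of_nonneg, mul_comm]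

theorem derivative_single_mul (m : ℤ) (r : R) (x : R⸨X⸩) :
    derivative R (single m r * x) = single m r * derivative R x + single (m - 1) (m * r) * x := by
  ext n
  simp only [coeff_add, derivative_coeff, coeff_single_mul]
  rw [show n + 1 - m = n - m + 1 by ring, show n - (m - 1) = n - m + 1 by ring, zsmul_eq_mul,
    zsmul_eq_mul]
  push_cast
  ring

theorem derivative_mul (x y : R⸨X⸩) :
    derivative R (x * y) = x * derivative R y + y * derivative R x := by
  obtain ⟨m, F, rfl⟩ : ∃ (m : ℤ) (F : R⟦X⟧), x = single m 1 * (F : R⸨X⸩) :=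
    ⟨_, _, (single_order_mul_powerSeriesPart x).symm⟩
  obtain ⟨n, G, rfl⟩ : ∃ (n : ℤ) (G : R⟦X⟧), y = single n 1 * (G : R⸨X⸩) :=
    ⟨_, _, (single_order_mul_powerSeriesPart y).symm⟩
  have hmn : single m (1 : R) * single n 1 = single (m + n) 1 := by simp
  have hm : single m (1 : R) * single (n - 1) (n : R) = single (m + n - 1) (n : R) := by
    rw [single_mul_single, one_mul, add_sub_assoc]
  have hn : single n (1 : R) * single (m - 1) (m : R) = single (m + n - 1) (m : R) := by
    rw [single_mul_single, one_mul, add_comm m, add_sub_assoc]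
  rw [mul_mul_mul_comm, hmn, ← PowerSeries.coe_mul, derivative_single_mul, derivative_single_mul,
    derivative_single_mul, derivative_coe, derivative_coe, derivative_coe, Derivation.leibniz,
    smul_eq_mul, smul_eq_mul]
  simp only [mul_one, Int.cast_add, single_add]
  push_cast
  linear_combination -(↑F * ↑(d⁄dX R G) + ↑G * ↑(d⁄dX R F) : R⸨X⸩) * hmn -
    (↑F * ↑G : R⸨X⸩) * (hm + hn)

variable (R) in
noncomputable def derivation : Derivation R R⸨X⸩ R⸨X⸩ where
  toFun := derivative R
  map_add' := map_add _
  map_smul' r x := by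
    -- The `R`-algebra structure on `R⸨X⸩` comes through `R⟦X⟧`, so its scalar action is the
    -- coefficientwise one only up to a rewrite.
    simp only [Algebra.smul_def, HahnSeries.algebraMap_apply', ← PowerSeries.C_eq_algebraMap,
      ofPowerSeries_C, C_mul_eq_smul, RingHom.id_apply]
    exact map_smul (derivative R) r x
  map_one_eq_zero' := by
    change derivative R (single 0 1) = 0
    rw [derivative_apply, hasseDeriv_single]
    simp
  leibniz' x y := by
    simp only [smul_eq_mul]
    exact derivative_mul x y

@[simp]
theorem derivation_apply (x : R⸨X⸩) : derivation R x = derivative R x := rfl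

variable (R) in
/-- `[f∂, g∂] = (wittBracket R f g) ∂` in `Witt(R)`. -/
noncomputable def wittBracket (f g : R⸨X⸩) : R⸨X⸩ := f * derivative R g - g * derivative R f

theorem wittBracket_single_mul_coe (m n : ℤ) (F G : R⟦X⟧) :
    wittBracket R (single m 1 * (F : R⸨X⸩)) (single n 1 * (G : R⸨X⸩)) =
      single (m + n - 1) 1 *
        ((PowerSeries.C ((n : R) - m) * F * G + PowerSeries.X * (F * d⁄dX R G - G * d⁄dX R F) :
          R⟦X⟧) : R⸨X⸩) := by
  have hmn : single m (1 : R) * single n 1 = single (m + n - 1) 1 * single 1 1 := by simp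
  have hm : single m (1 : R) * single (n - 1) (n : R) = single (m + n - 1) (n : R) := by
    rw [single_mul_single, one_mul, add_sub_assoc]
  have hn : single n (1 : R) * single (m - 1) (m : R) = single (m + n - 1) (m : R) := by
    rw [single_mul_single, one_mul, add_comm m, add_sub_assoc]
  have hC : single (m + n - 1) (1 : R) * HahnSeries.C ((n : R) - m) =
      single (m + n - 1) (n : R) - single (m + n - 1) (m : R) := by
    simp [HahnSeries.C_apply, ← single_sub]
  simp only [wittBracket, derivative_single_mul, derivative_coe, mul_one]
  push_cast
  rw [ofPowerSeries_X, ofPowerSeries_C]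
  linear_combination (↑F * ↑(d⁄dX R G) - ↑G * ↑(d⁄dX R F) : R⸨X⸩) * hmn +
    (↑F * ↑G : R⸨X⸩) * (hm - hn - hC)

end CommRing

section Field

variable {k : Type*} [Field k]

theorem exists_eq_smul_of_mul_derivative_eq [CharZero k] {g h : k⸨X⸩} (hg : g ≠ 0)
    (hgh : h * derivative k g = g * derivative k h) : ∃ c : k, h = c • g := by
  have hD : derivative k (h / g) = 0 := by
    simpa only [derivation_apply, smul_eq_mul, hgh, sub_self, mul_zero] using
      (derivation k).leibniz_div h g
  refine ⟨(h / g).coeff 0, ?_⟩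
  rw [← single_zero_mul_eq_smul, ← eq_single_zero_of_derivative_eq_zero hD,
    div_mul_cancel₀ h hg]

theorem exists_eq_smul_of_wittBracket_eq_smul [CharZero k] {f g h : k⸨X⸩} {a : k} (hf : f ≠ 0)
    (hg : g ≠ 0) (hfg : wittBracket k f g = a • g) (hfh : wittBracket k f h = a • h) :
    ∃ c : k, h = c • g := by
  refine exists_eq_smul_of_mul_derivative_eq hg ?_
  rw [wittBracket, ← C_mul_eq_smul] at hfg hfh
  have : f * (h * derivative k g - g * derivative k h) = 0 := by
    linear_combination h * hfg - g * hfh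
  exact sub_eq_zero.mp ((mul_eq_zero.mp this).resolve_left hf)

theorem eq_order_sub_one_mul_of_wittBracket_eq_smul {f g : k⸨X⸩} {a : k} (hf : f.order = 1)
    (hg : g ≠ 0) (hfg : wittBracket k f g = a • g) :
    a = ((g.order - 1 : ℤ) : k) * f.coeff 1 := by
  rw [← single_order_mul_powerSeriesPart f, ← single_order_mul_powerSeriesPart g, hf,
    wittBracket_single_mul_coe, ← C_mul_eq_smul, mul_left_comm, ← ofPowerSeries_C, ← map_mul,
    add_sub_cancel_left] at hfg
  have := congrArg PowerSeries.constantCoeff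
    (ofPowerSeries_injective (mul_left_cancel₀ (single_ne_zero one_ne_zero) hfg))
  have hG : g.coeff g.order ≠ 0 := coeff_order_eq_zero.not.mpr hg
  simp only [map_add, map_mul, PowerSeries.constantCoeff_C, PowerSeries.constantCoeff_X,
    zero_mul, add_zero, constantCoeff_powerSeriesPart, hf] at this
  rw [← mul_right_cancel₀ hG this]
  push_cast
  ring

theorem exists_mul_derivative_eq_smul [CharZero k] {f : k⸨X⸩} (hf : f.order = 1) :
    ∃ u : k⸨X⸩, u ≠ 0 ∧ f * derivative k u = f.coeff 1 • u := by
  set q := f.powerSeriesPart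
  have hq : PowerSeries.constantCoeff q = f.coeff 1 := by rw [constantCoeff_powerSeriesPart, hf]
  have hc : f.coeff 1 ≠ 0 := hf ▸ coeff_order_eq_zero.not.mpr (ne_zero_of_order_eq_one hf)
  obtain ⟨r, hr⟩ : PowerSeries.X ∣ PowerSeries.C (f.coeff 1) - q := by
    rw [PowerSeries.X_dvd_iff, map_sub, PowerSeries.constantCoeff_C, hq, sub_self]
  obtain ⟨h, h0, hdh⟩ := PowerSeries.exists_derivative_eq_mul (r * q⁻¹)
  have hqh : q * d⁄dX k h = r * h := by
    rw [hdh, ← mul_assoc, mul_left_comm, PowerSeries.mul_inv_cancel q (hq ▸ hc), mul_one]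
  have key : PowerSeries.X * q * (PowerSeries.X * d⁄dX k h + h) =
      PowerSeries.C (f.coeff 1) * (PowerSeries.X * h) := by
    linear_combination PowerSeries.X * PowerSeries.X * hqh - PowerSeries.X * h * hr
  have hh : (h : k⸨X⸩) ≠ 0 :=
    (map_ne_zero_iff _ ofPowerSeries_injective).mpr fun h' => by simp [h'] at h0
  refine ⟨single 1 1 * (h : k⸨X⸩), mul_ne_zero (single_ne_zero one_ne_zero) hh, ?_⟩
  conv_lhs => rw [← single_order_mul_powerSeriesPart f, hf]
  rw [derivative_single_mul, derivative_coe, ← C_mul_eq_smul, ← ofPowerSeries_X,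
    ← ofPowerSeries_C]
  simpa using congrArg (ofPowerSeries ℤ k) key

theorem wittBracket_mul_zpow {f u : k⸨X⸩} {c : k} (hu : u ≠ 0)
    (hfu : f * derivative k u = c • u) (N : ℤ) :
    wittBracket k f (f * u ^ N) = ((N : k) * c) • (f * u ^ N) := by
  have hD : derivative k (u ^ N) = N * u ^ (N - 1) * derivative k u := by
    simpa [zsmul_eq_mul, smul_eq_mul, mul_assoc] using (derivation k).leibniz_zpow u N
  have hpow : u ^ (N - 1) * u = u ^ N := by rw [← zpow_add_one₀ hu, sub_add_cancel]
  rw [← C_mul_eq_smul] at hfu ⊢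
  rw [wittBracket, derivative_mul, hD, map_mul, map_intCast]
  linear_combination (N * f * u ^ (N - 1)) * hfu + (N * HahnSeries.C c * f) * hpow

end Field

end LaurentSeries

theorem stmt15_general {k : Type} [Field k] [CharZero k]
    (f : LaurentSeries k) (horder : f.order = 1) :
    (∀ a : k, (∃ g : LaurentSeries k, g ≠ 0 ∧
        f * LaurentSeries.derivative k g - g * LaurentSeries.derivative k f = a • g) →
      ∃ N : ℤ, a = N • f.coeff 1) ∧
    (∀ N : ℤ, ∃ g : LaurentSeries k, g ≠ 0 ∧
      f * LaurentSeries.derivative k g - g * LaurentSeries.derivative k f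
        = (N • f.coeff 1) • g) ∧
    (∀ a : k, ∀ g h : LaurentSeries k, g ≠ 0 →
      f * LaurentSeries.derivative k g - g * LaurentSeries.derivative k f = a • g →
      f * LaurentSeries.derivative k h - h * LaurentSeries.derivative k f = a • h →
      ∃ c : k, h = c • g) := by
  have hf : f ≠ 0 := LaurentSeries.ne_zero_of_order_eq_one horder
  obtain ⟨u, hu, hfu⟩ := LaurentSeries.exists_mul_derivative_eq_smul horder
  refine ⟨fun a ⟨g, hg, hfg⟩ => ⟨g.order - 1, ?_⟩, fun N => ⟨f * u ^ N, ?_, ?_⟩,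
    fun a g h hg => LaurentSeries.exists_eq_smul_of_wittBracket_eq_smul hf hg⟩
  · rw [zsmul_eq_mul]
    exact LaurentSeries.eq_order_sub_one_mul_of_wittBracket_eq_smul horder hg hfg
  · exact mul_ne_zero hf (zpow_ne_zero N hu)
  · rw [zsmul_eq_mul]
    exact LaurentSeries.wittBracket_mul_zpow hu hfu N

/-- If `f∂ ∈ Witt(R)` is nonzero with `W(f) = 1`, then every eigenvalue of
`ad(f∂)` is an integer multiple of `f'(0)` (the coefficient of `x` in `f`);
conversely every `N·f'(0)` is an eigenvalue, and each eigenspace is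
one-dimensional. -/
theorem stmt15 {k : Type} [Field k] [CharZero k]
    (f : LaurentSeries k) (hf : f ≠ 0) (horder : f.order = 1) :
    (∀ a : k, (∃ g : LaurentSeries k, g ≠ 0 ∧
        f * LaurentSeries.derivative k g - g * LaurentSeries.derivative k f = a • g) →
      ∃ N : ℤ, a = N • f.coeff 1) ∧
    (∀ N : ℤ, ∃ g : LaurentSeries k, g ≠ 0 ∧
      f * LaurentSeries.derivative k g - g * LaurentSeries.derivative k f
        = (N • f.coeff 1) • g) ∧
    (∀ a : k, ∀ g h : LaurentSeries k, g ≠ 0 →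
      f * LaurentSeries.derivative k g - g * LaurentSeries.derivative k f = a • g →
      f * LaurentSeries.derivative k h - h * LaurentSeries.derivative k f = a • h →
      ∃ c : k, h = c • g) :=
  stmt15_general f horder
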